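/- Let n ≥ 2 and let c ∈ F_{2^n} with c ≠ 0 and c ≠ 1. Then the c-DDT entry of the (0,1)-swapped inverse function satisfies Δ_c(1, 0) = 1; the unique solution of G(x+1) + c·G(x) = 0 is x = c/(c+1). -/
import Mathlib


open Finset

/-- The (0,1)-swapped inverse function on a field of characteristic 2 with `2^n` elements:
`G(x) = x^(2^n-2) + x^(2^n-1) + (x+1)^(2^n-1)`. -/
def swappedInv {F : Type*} [Field F] (n : ℕ) (x : F) : F :=
  x ^ (2 ^ n - 2) + x ^ (2 ^ n - 1) + (x + 1) ^ (2 ^ n - 1)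

/-- The `c`-DDT entry of the swapped inverse function at `(a, b)`:
the number of `x` with `G(x+a) + c·G(x) = b`. -/
def cDDT (F : Type*) [Field F] [Fintype F] [DecidableEq F] (n : ℕ) (c a b : F) : ℕ :=
  (univ.filter (fun x : F => swappedInv n (x + a) + c * swappedInv n x = b)).card

/-- The `c`-BCT entry of the swapped inverse function at `(a, b)`:
the number of pairs `(x, γ)` with `G(x+γ) + c·G(x) = b` and `G(x+γ+a) + c⁻¹·G(x+a) = b`. -/
def cBCT (F : Type*) [Field F] [Fintype F] [DecidableEq F] (n : ℕ) (c a b : F) : ℕ :=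
  (univ.filter (fun p : F × F =>
    swappedInv n (p.1 + p.2) + c * swappedInv n p.1 = b ∧
    swappedInv n (p.1 + p.2 + a) + c⁻¹ * swappedInv n (p.1 + a) = b)).card

/-- The absolute trace map on a field with `2^n` elements: `Tr(x) = ∑_{i=0}^{n-1} x^(2^i)`. -/
def trF {F : Type*} [Field F] (n : ℕ) (x : F) : F :=
  ∑ i ∈ Finset.range n, x ^ (2 ^ i)

section aux
variable {F : Type*} [Field F] [Fintype F] {n : ℕ}

lemma pow4 (hn : 2 ≤ n) : 4 ≤ 2 ^ n := by
  calc (4:ℕ) = 2 ^ 2 := rfl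
  _ ≤ 2 ^ n := Nat.pow_le_pow_right (by norm_num) hn

lemma char2_of_card (hF : Fintype.card F = 2 ^ n) (hn : 2 ≤ n) : CharP F 2 := by
  haveI := ringChar.charP F
  obtain ⟨k, hp, hk⟩ := FiniteField.card F (ringChar F)
  have hpdvd : ringChar F ∣ 2 ^ n := by
    rw [← hF, hk]; exact dvd_pow_self _ (by exact_mod_cast k.2.ne')
  have : ringChar F = 2 := (Nat.prime_dvd_prime_iff_eq hp Nat.prime_two).mp
    (hp.dvd_of_dvd_pow hpdvd)
  rw [← this]; exact ringChar.charP F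

omit [Fintype F] in
lemma swappedInv_zero (hn : 2 ≤ n) : swappedInv n (0 : F) = 1 := by
  have h4 := pow4 (n := n) hn
  rw [swappedInv, zero_pow (by omega), zero_pow (by omega), zero_add, zero_add, zero_add,
    one_pow]

lemma swappedInv_one (hF : Fintype.card F = 2 ^ n) (hn : 2 ≤ n) : swappedInv n (1 : F) = 0 := by
  have h4 := pow4 (n := n) hn
  haveI := char2_of_card hF hn
  have h11 : (1 : F) + 1 = 0 := CharTwo.add_self_eq_zero 1
  rw [swappedInv, h11, one_pow, one_pow, zero_pow (by omega), add_zero, h11]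

lemma swappedInv_ne (hF : Fintype.card F = 2 ^ n) (hn : 2 ≤ n) {x : F} (hx0 : x ≠ 0)
    (hx1 : x ≠ 1) : swappedInv n x = x⁻¹ := by
  have h4 := pow4 (n := n) hn
  haveI := char2_of_card hF hn
  have h11 : (1 : F) + 1 = 0 := CharTwo.add_self_eq_zero 1
  have hx1' : x + 1 ≠ 0 := by
    intro h; apply hx1; linear_combination h - h11
  have hp1 : x ^ (2 ^ n - 1) = 1 := by
    rw [← hF]; exact FiniteField.pow_card_sub_one_eq_one x hx0
  have hp1' : (x + 1) ^ (2 ^ n - 1) = 1 := by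
    rw [← hF]; exact FiniteField.pow_card_sub_one_eq_one _ hx1'
  have hp2 : x ^ (2 ^ n - 2) = x⁻¹ := by
    refine eq_inv_of_mul_eq_one_left ?_
    rw [mul_comm, ← pow_succ']
    have : 2 ^ n - 2 + 1 = 2 ^ n - 1 := by omega
    rw [this, hp1]
  rw [swappedInv, hp1, hp1', hp2, add_assoc, h11, add_zero]

end aux

theorem stmt_7 (n : ℕ) (hn : 2 ≤ n) (F : Type*) [Field F] [Fintype F] [DecidableEq F]
    (hF : Fintype.card F = 2 ^ n)
    (c : F) (hc0 : c ≠ 0) (hc1 : c ≠ 1) :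
    cDDT F n c 1 0 = 1 ∧
      ∀ x : F, swappedInv n (x + 1) + c * swappedInv n x = 0 ↔ x = c / (c + 1) := by
  haveI := char2_of_card hF hn
  have h11 : (1 : F) + 1 = 0 := CharTwo.add_self_eq_zero 1
  have hc1' : c + 1 ≠ 0 := by
    intro h; apply hc1; linear_combination h - h11
  have key : ∀ x : F, swappedInv n (x + 1) + c * swappedInv n x = 0 ↔ x = c / (c + 1) := by
    intro x
    rcases eq_or_ne x 0 with rfl | hx0
    · rw [zero_add, swappedInv_one hF hn, swappedInv_zero hn, mul_one, zero_add,
        eq_comm (a := (0:F)), div_eq_zero_iff]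
      simp [hc0, hc1']
    rcases eq_or_ne x 1 with rfl | hx1
    · rw [h11, swappedInv_zero hn, swappedInv_one hF hn, mul_zero, add_zero]
      constructor
      · intro h; exact absurd h one_ne_zero
      · intro h
        rw [eq_comm, div_eq_iff hc1', one_mul] at h
        exact absurd (by linear_combination -h : (1:F) = 0) one_ne_zero
    have hxp0 : x + 1 ≠ 0 := fun h => hx1 (by linear_combination h - h11)
    have hxp1 : x + 1 ≠ 1 := fun h => hx0 (by linear_combination h)
    rw [swappedInv_ne hF hn hxp0 hxp1, swappedInv_ne hF hn hx0 hx1, eq_div_iff hc1']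
    constructor
    · intro h
      have h2 : x + c * (x + 1) = 0 := by
        have e : (x * (x + 1)) * ((x + 1)⁻¹ + c * x⁻¹) = x + c * (x + 1) := by
          field_simp
        rw [← e, h, mul_zero]
      linear_combination h2 - c * h11
    · intro h
      have e : (x + 1)⁻¹ + c * x⁻¹ = (x + c * (x + 1)) / (x * (x + 1)) := by
        rw [eq_div_iff (mul_ne_zero hx0 hxp0)]
        field_simp
      rw [e, div_eq_zero_iff]
      left
      linear_combination h + c * h11
  refine ⟨?_, key⟩
  have hset : (univ.filter (fun x : F => swappedInv n (x + 1) + c * swappedInv n x = 0))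
      = {c / (c + 1)} := by
    ext y; simp [key y]
  rw [cDDT, hset, card_singleton]
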